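/- Let S ⊆ ℝᵐ be an open convex set and F : ℝᵐ → ℝᵐ a continuously differentiable map that is pseudomonotone on S. Suppose that the Jacobian matrix DF(x) is symmetric for every x ∈ S. Then for every x ∈ S, the symmetric matrix DF(x) has at most one negative eigenvalue counting multiplicity; i.e., listing the eigenvalues of DF(x) with multiplicity as λ₁, …, λ_m, at most one index i satisfies λ_i < 0. -/

import Mathlib

/-!
Fix `x ∈ S` and `d` with `F x ⬝ᵥ d = 0`. Pseudomonotonicity applied to `x` and `x + t • d` gives
`0 ≤ F (x + t • d) ⬝ᵥ d` for small `t > 0`, and the value at `t = 0` is `0`; so `x` minimises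
`y ↦ F y ⬝ᵥ d` along the ray `x + ℝ≥0 • d`, and first-order optimality gives `0 ≤ DF(x) d ⬝ᵥ d`.
Hence the quadratic form of `DF(x)` is positive semidefinite on the hyperplane `F(x)ᗮ`. Two
orthonormal eigenvectors with negative eigenvalues would span a plane on which the form is negative
definite, and that plane meets the hyperplane nontrivially.
-/

open Filter Matrix

variable {ι : Type*} [Fintype ι]

def PseudomonotoneOn (S : Set (ι → ℝ)) (F : (ι → ℝ) → ι → ℝ) : Prop :=
  ∀ x ∈ S, ∀ y ∈ S, 0 ≤ F x ⬝ᵥ (y - x) → 0 ≤ F y ⬝ᵥ (y - x)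

theorem PseudomonotoneOn.dotProduct_nonneg_of_mem_ray {S : Set (ι → ℝ)} {F : (ι → ℝ) → ι → ℝ}
    (hF : PseudomonotoneOn S F) {x d : ι → ℝ} (hx : x ∈ S) (hd : F x ⬝ᵥ d = 0) {t : ℝ}
    (ht : 0 < t) (hxt : x + t • d ∈ S) : 0 ≤ F (x + t • d) ⬝ᵥ d := by
  have h := hF x hx _ hxt
  simp only [add_sub_cancel_left, dotProduct_smul, hd, smul_eq_mul, mul_zero, le_refl,
    forall_const] at h
  exact nonneg_of_mul_nonneg_right h ht

theorem HasFDerivAt.dotProduct_const {E : Type*} [NormedAddCommGroup E] [NormedSpace ℝ E]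
    {f : E → ι → ℝ} {f' : E →L[ℝ] ι → ℝ} {x : E} (hf : HasFDerivAt f f' x) (d : ι → ℝ) :
    HasFDerivAt (fun y => f y ⬝ᵥ d) (∑ i, d i • (ContinuousLinearMap.proj i).comp f') x :=
  HasFDerivAt.fun_sum fun i _ => ((hasFDerivAt_apply i _).comp x hf).mul_const (d i)

theorem PseudomonotoneOn.fderiv_dotProduct_self_nonneg {S : Set (ι → ℝ)}
    {F : (ι → ℝ) → ι → ℝ} (hF : PseudomonotoneOn S F) (hS : IsOpen S) {x d : ι → ℝ}
    (hx : x ∈ S) (hFx : DifferentiableAt ℝ F x) (hd : F x ⬝ᵥ d = 0) :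
    0 ≤ fderiv ℝ F x d ⬝ᵥ d := by
  set ray := (fun t : ℝ => x + t • d) '' Set.Ici 0
  have hmin : IsLocalMinOn (fun y => F y ⬝ᵥ d) ray x := by
    filter_upwards [nhdsWithin_le_nhds (hS.mem_nhds hx), self_mem_nhdsWithin]
    rintro _ hyS ⟨t, ht, rfl⟩
    rw [hd]
    rcases (Set.mem_Ici.mp ht).eq_or_lt with rfl | ht
    · simpa using hd.ge
    · exact hF.dotProduct_nonneg_of_mem_ray hx hd ht hyS
  have hcone : d ∈ posTangentConeAt ray x :=
    mem_posTangentConeAt_of_frequently_mem <| Eventually.frequently <|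
      eventually_nhdsWithin_of_forall fun t ht => ⟨t, Set.Ioi_subset_Ici_self ht, rfl⟩
  simpa [dotProduct, mul_comm] using hmin.hasFDerivWithinAt_nonneg
    (hFx.hasFDerivAt.dotProduct_const d).hasFDerivWithinAt hcone

theorem exists_ne_zero_dotProduct_add_eq_zero (c u v : ι → ℝ) :
    ∃ a b : ℝ, (a ≠ 0 ∨ b ≠ 0) ∧ c ⬝ᵥ (a • u + b • v) = 0 := by
  by_cases hu : c ⬝ᵥ u = 0
  · exact ⟨1, 0, Or.inl one_ne_zero, by simp [hu]⟩
  · refine ⟨c ⬝ᵥ v, -(c ⬝ᵥ u), Or.inr (neg_ne_zero.mpr hu), ?_⟩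
    simp only [dotProduct_add, dotProduct_smul, smul_eq_mul]
    ring

namespace Matrix.IsHermitian

variable [DecidableEq ι] {A : Matrix ι ι ℝ} (hA : A.IsHermitian)

theorem eigenvectorBasis_dotProduct (i j : ι) :
    ⇑(hA.eigenvectorBasis i) ⬝ᵥ ⇑(hA.eigenvectorBasis j) = if i = j then 1 else 0 := by
  rw [← hA.eigenvectorBasis.inner_eq_ite, EuclideanSpace.inner_eq_star_dotProduct, star_trivial,
    dotProduct_comm]

theorem mulVec_dotProduct_eigenvectorBasis_add {i j : ι} (hij : i ≠ j) (a b : ℝ) :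
    let w := a • ⇑(hA.eigenvectorBasis i) + b • ⇑(hA.eigenvectorBasis j)
    A *ᵥ w ⬝ᵥ w = a ^ 2 * hA.eigenvalues i + b ^ 2 * hA.eigenvalues j := by
  simp only [mulVec_add, mulVec_smul, mulVec_eigenvectorBasis, add_dotProduct, dotProduct_add,
    smul_dotProduct, dotProduct_smul, eigenvectorBasis_dotProduct, if_pos, if_neg hij,
    if_neg hij.symm, smul_eq_mul]
  ring

theorem eq_of_eigenvalues_neg {c : ι → ℝ} (hq : ∀ d, c ⬝ᵥ d = 0 → 0 ≤ A *ᵥ d ⬝ᵥ d) {i j : ι}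
    (hi : hA.eigenvalues i < 0) (hj : hA.eigenvalues j < 0) : i = j := by
  by_contra hij
  obtain ⟨a, b, hab, hc⟩ := exists_ne_zero_dotProduct_add_eq_zero c
    (hA.eigenvectorBasis i) (hA.eigenvectorBasis j)
  have hnonneg := hq _ hc
  rw [hA.mulVec_dotProduct_eigenvectorBasis_add hij] at hnonneg
  have hi' := mul_nonpos_of_nonneg_of_nonpos (sq_nonneg a) hi.le
  have hj' := mul_nonpos_of_nonneg_of_nonpos (sq_nonneg b) hj.le
  rcases hab with ha | hb
  · linarith [mul_neg_of_pos_of_neg (sq_pos_of_ne_zero ha) hi]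
  · linarith [mul_neg_of_pos_of_neg (sq_pos_of_ne_zero hb) hj]

end Matrix.IsHermitian

theorem stmt_12_general {m : ℕ} (S : Set (Fin m → ℝ)) (hSopen : IsOpen S)
    (F : (Fin m → ℝ) → (Fin m → ℝ)) (hF : ContDiff ℝ 1 F)
    (hpseudo : ∀ x ∈ S, ∀ y ∈ S,
      0 ≤ ∑ i, F x i * (y i - x i) → 0 ≤ ∑ i, F y i * (y i - x i))
    (J : (Fin m → ℝ) → Matrix (Fin m) (Fin m) ℝ)
    (hJ : ∀ x ∈ S, ∀ u : Fin m → ℝ, (J x).mulVec u = fderiv ℝ F x u)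
    (hsym : ∀ x ∈ S, (J x).IsHermitian) :
    ∀ (x : Fin m → ℝ) (hx : x ∈ S), ∀ i j : Fin m,
      (hsym x hx).eigenvalues i < 0 → (hsym x hx).eigenvalues j < 0 → i = j := by
  intro x hx i j hi hj
  have hmono : PseudomonotoneOn S F := hpseudo
  refine (hsym x hx).eq_of_eigenvalues_neg (c := F x) (fun d hd => ?_) hi hj
  rw [hJ x hx]
  exact hmono.fderiv_dotProduct_self_nonneg hSopen hx (hF.differentiable one_ne_zero x) hd

theorem stmt_12 {m : ℕ} (S : Set (Fin m → ℝ)) (hSopen : IsOpen S) (hSconv : Convex ℝ S)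
    (F : (Fin m → ℝ) → (Fin m → ℝ)) (hF : ContDiff ℝ 1 F)
    (hpseudo : ∀ x ∈ S, ∀ y ∈ S,
      0 ≤ ∑ i, F x i * (y i - x i) → 0 ≤ ∑ i, F y i * (y i - x i))
    (J : (Fin m → ℝ) → Matrix (Fin m) (Fin m) ℝ)
    (hJ : ∀ x ∈ S, ∀ u : Fin m → ℝ, (J x).mulVec u = fderiv ℝ F x u)
    (hsym : ∀ x ∈ S, (J x).IsHermitian) :
    ∀ (x : Fin m → ℝ) (hx : x ∈ S), ∀ i j : Fin m,
      (hsym x hx).eigenvalues i < 0 → (hsym x hx).eigenvalues j < 0 → i = j :=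
  stmt_12_general S hSopen F hF hpseudo J hJ hsym
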